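/- Let p be a polynomial of degree n over ℂ with p(0) = 1 that has no zeros in the open unit disk. Then there exists an n × n complex matrix K with operator norm at most 1 such that p(z) = det(I - z•K) for all z ∈ ℂ. -/

import Mathlib

/-!
Since `p` splits over `ℂ` and `p(0) = 1`, its roots `r₁, …, rₙ` are nonzero and
`p(z) = ∏ (1 - z / rᵢ)`. The roots lie outside the open unit disk, so the diagonal matrix
`K = diag(1 / rᵢ)` has operator norm `maxᵢ |1 / rᵢ| ≤ 1`, and `det(I - zK) = ∏ (1 - z / rᵢ)`.
-/

open scoped Matrix.Norms.L2Operator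
open Polynomial Matrix

theorem Multiset.exists_map_univ_eq {α : Type*} {n : ℕ} (s : Multiset α) (hs : s.card = n) :
    ∃ f : Fin n → α, Finset.univ.val.map f = s := by
  obtain ⟨l, rfl⟩ : ∃ l : List α, (l : Multiset α) = s := Quot.exists_rep s
  rw [Multiset.coe_card] at hs
  subst hs
  exact ⟨l.get, by rw [Fin.univ_val_map, List.ofFn_get]⟩

theorem Polynomial.Splits.eval_eq_prod_roots_one_sub_mul_inv {K : Type*} [Field K] {f : K[X]}
    (hf : f.Splits) (h0 : f.eval 0 = 1) (x : K) :
    f.eval x = (f.roots.map fun a => 1 - x * a⁻¹).prod := by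
  have hroots_ne_zero : ∀ a ∈ f.roots, a ≠ 0 := by
    rintro a ha rfl
    simp [(mem_roots'.mp ha).2.eq_zero] at h0
  have hconst : f.leadingCoeff * (f.roots.map fun a => -a).prod = 1 := by
    simpa using (hf.eval_eq_prod_roots 0).symm.trans h0
  have hfactor : f.roots.map (x - ·) = f.roots.map fun a => -a * (1 - x * a⁻¹) :=
    Multiset.map_congr rfl fun a ha => by field_simp [hroots_ne_zero a ha]; ring
  rw [hf.eval_eq_prod_roots, hfactor, Multiset.prod_map_mul, ← mul_assoc, hconst, one_mul]

theorem Matrix.det_one_sub_smul_diagonal {ι R : Type*} [Fintype ι] [DecidableEq ι] [CommRing R]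
    (z : R) (d : ι → R) : (1 - z • diagonal d).det = ∏ i, (1 - z * d i) := by
  rw [← diagonal_one, ← diagonal_smul, diagonal_sub, det_diagonal]
  rfl

theorem stmt_1 (n : ℕ) (p : Polynomial ℂ) (hdeg : p.natDegree = n)
    (h0 : p.eval 0 = 1) (hstable : ∀ z : ℂ, ‖z‖ < 1 → p.eval z ≠ 0) :
    ∃ K : Matrix (Fin n) (Fin n) ℂ, ‖K‖ ≤ 1 ∧
      ∀ z : ℂ, p.eval z = (1 - z • K).det := by
  obtain ⟨r, hr⟩ := p.roots.exists_map_univ_eq (IsAlgClosed.card_roots_eq_natDegree.trans hdeg)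
  have hr_norm : ∀ i, 1 ≤ ‖r i‖ := fun i => not_lt.mp fun hlt =>
    hstable _ hlt (isRoot_of_mem_roots (hr ▸ Multiset.mem_map_of_mem r (Finset.mem_univ i)))
  refine ⟨diagonal fun i => (r i)⁻¹, ?_, fun z => ?_⟩
  · rw [l2_opNorm_diagonal, pi_norm_le_iff_of_nonneg zero_le_one]
    exact fun i => (norm_inv (r i)).trans_le (inv_le_one_of_one_le₀ (hr_norm i))
  · rw [(IsAlgClosed.splits p).eval_eq_prod_roots_one_sub_mul_inv h0, ← hr, Multiset.map_map,
      det_one_sub_smul_diagonal, Finset.prod_eq_multiset_prod]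
    rfl
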